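/- (Extension preserves feasibility) If A = (A_0,...,A_n) is a feasible solution to the (n,d) Delsarte linear program, then its extension A' = (A'_0,...,A'_{n+1}) defined by A'_i = 0 for odd i and A'_i = A_i + A_{i−1} for even i is a feasible solution to the (n+1, 2⌈d/2⌉) Delsarte linear program; in particular the Delsarte inequalities Σ_{i=0}^{n+1} A'_i K_j(i;n+1) ≥ 0 hold for all j ∈ [1,n+1]. -/
import Mathlib


open Finset

/-- Integer binomial coefficient with convention C(a,b)=0 unless 0 ≤ b ≤ a. -/
def intChoose (a b : ℤ) : ℤ :=
  if 0 ≤ a ∧ 0 ≤ b then (a.toNat.choose b.toNat : ℤ) else 0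

/-- Krawtchouk polynomial K_j(i;n) = Σ_{k=0}^{j} (-1)^k C(i,k) C(n-i,j-k),
with the convention K_j(i;n)=0 if j ∉ [0,n] or i ∉ [0,n]. -/
def kraw (n : ℕ) (j i : ℤ) : ℤ :=
  ∑ k ∈ Finset.range (j.toNat + 1),
    (-1) ^ k * intChoose i k * intChoose ((n : ℤ) - i) (j - k)

/-- Feasibility for the (n,d) Delsarte linear program: A_0 = 1, A_i = 0 for
1 ≤ i ≤ d-1, A_i ≥ 0 for i ≤ n, and the Delsarte inequalities
Σ_{i=0}^{n} A_i K_j(i;n) ≥ 0 for all 1 ≤ j ≤ n. -/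
def delsarteFeasible (n d : ℕ) (A : ℕ → ℚ) : Prop :=
  A 0 = 1 ∧ (∀ i : ℕ, 1 ≤ i → i ≤ d - 1 → A i = 0) ∧
    (∀ i : ℕ, i ≤ n → 0 ≤ A i) ∧
    ∀ j : ℕ, 1 ≤ j → j ≤ n →
      0 ≤ ∑ i ∈ Finset.range (n + 1), A i * (kraw n j i : ℚ)
open Polynomial

lemma coeff_one_sub_X_pow (i k : ℕ) :
    ((1 - X : ℤ[X]) ^ i).coeff k = (-1) ^ k * i.choose k := by
  have h : (1 - X : ℤ[X]) ^ i = ∑ m ∈ Finset.range (i + 1), C ((-1) ^ m * (i.choose m : ℤ)) * X ^ m := by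
    rw [sub_eq_add_neg, add_comm, add_pow]
    refine Finset.sum_congr rfl fun m hm => ?_
    rw [map_mul, map_pow, map_neg, map_one, map_natCast, neg_pow]
    ring
  rw [h, finset_sum_coeff]
  simp only [coeff_C_mul, coeff_X_pow, mul_ite, mul_one, mul_zero]
  rw [Finset.sum_ite_eq (Finset.range (i + 1)) k]
  split_ifs with hk
  · rfl
  · rw [Nat.choose_eq_zero_of_lt (by simpa [Nat.lt_succ] using hk)]
    simp

lemma kraw_eq_coeff (n j i : ℕ) (hi : i ≤ n) :
    kraw n j i = ((1 - X : ℤ[X]) ^ i * (1 + X) ^ (n - i)).coeff j := by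
  rw [coeff_mul, Finset.Nat.sum_antidiagonal_eq_sum_range_succ_mk]
  unfold kraw
  rw [Int.toNat_natCast]
  refine Finset.sum_congr rfl fun k hk => ?_
  have hk' : k ≤ j := by simpa [Nat.lt_succ] using hk
  rw [coeff_one_sub_X_pow, coeff_one_add_X_pow]
  unfold intChoose
  rw [if_pos ⟨Int.natCast_nonneg i, Int.natCast_nonneg k⟩,
      if_pos ⟨by omega, by omega⟩]
  have h1 : ((n : ℤ) - i).toNat = n - i := by omega
  have h2 : ((j : ℤ) - k).toNat = j - k := by omega
  rw [Int.toNat_natCast, Int.toNat_natCast, h1, h2]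

lemma reflect_one_sub_X_pow (i : ℕ) :
    reflect i ((1 - X : ℤ[X]) ^ i) = C ((-1) ^ i) * (1 - X) ^ i := by
  ext k
  rw [coeff_reflect, coeff_C_mul]
  by_cases hk : k ≤ i
  · rw [revAt_le hk, coeff_one_sub_X_pow, coeff_one_sub_X_pow, Nat.choose_symm hk]
    have h2 : ((-1 : ℤ)) ^ i * (-1) ^ k = (-1) ^ (i - k) := by
      rw [← pow_add]
      have h3 : i + k = (i - k) + 2 * k := by omega
      rw [h3, pow_add, pow_mul]
      simp
    rw [← h2]
    ring
  · rw [revAt_eq_self_of_lt (by omega), coeff_one_sub_X_pow,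
      Nat.choose_eq_zero_of_lt (by omega)]
    simp

lemma reflect_one_add_X_pow (m : ℕ) :
    reflect m ((1 + X : ℤ[X]) ^ m) = (1 + X) ^ m := by
  ext k
  rw [coeff_reflect]
  by_cases hk : k ≤ m
  · rw [revAt_le hk, coeff_one_add_X_pow, coeff_one_add_X_pow, Nat.choose_symm hk]
  · rw [revAt_eq_self_of_lt (by omega)]

lemma reflect_f (n i : ℕ) (hi : i ≤ n) :
    reflect n ((1 - X : ℤ[X]) ^ i * (1 + X) ^ (n - i)) =
      C ((-1) ^ i) * ((1 - X) ^ i * (1 + X) ^ (n - i)) := by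
  have h1 : (1 - X : ℤ[X]).natDegree ≤ 1 := by
    refine le_trans (natDegree_sub_le 1 X) ?_
    simp
  have h2 : (1 + X : ℤ[X]).natDegree ≤ 1 := by
    refine le_trans (natDegree_add_le 1 X) ?_
    simp
  have hd1 : ((1 - X : ℤ[X]) ^ i).natDegree ≤ i := by
    simpa using natDegree_pow_le_of_le i h1
  have hd2 : ((1 + X : ℤ[X]) ^ (n - i)).natDegree ≤ n - i := by
    simpa using natDegree_pow_le_of_le (n - i) h2
  have hn : i + (n - i) = n := by omega
  calc reflect n ((1 - X : ℤ[X]) ^ i * (1 + X) ^ (n - i))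
      = reflect (i + (n - i)) ((1 - X : ℤ[X]) ^ i * (1 + X) ^ (n - i)) := by rw [hn]
    _ = reflect i ((1 - X : ℤ[X]) ^ i) * reflect (n - i) ((1 + X : ℤ[X]) ^ (n - i)) :=
        reflect_mul _ _ hd1 hd2
    _ = C ((-1) ^ i) * ((1 - X) ^ i * (1 + X) ^ (n - i)) := by
        rw [reflect_one_sub_X_pow, reflect_one_add_X_pow]; ring

lemma coeff_symm (n i : ℕ) (hi : i ≤ n) (k : ℕ) (hk : k ≤ n) :
    ((1 - X : ℤ[X]) ^ i * (1 + X) ^ (n - i)).coeff (n - k) =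
      (-1) ^ i * ((1 - X : ℤ[X]) ^ i * (1 + X) ^ (n - i)).coeff k := by
  have h := coeff_reflect n ((1 - X : ℤ[X]) ^ i * (1 + X) ^ (n - i)) k
  rw [reflect_f n i hi, revAt_le hk, coeff_C_mul] at h
  exact h.symm

lemma kraw_zero (n i : ℕ) (hi : i ≤ n) : kraw n 0 i = 1 := by
  unfold kraw intChoose
  rw [show ((0:ℤ)).toNat = 0 from rfl]
  rw [Finset.sum_range_one]
  rw [if_pos ⟨Int.natCast_nonneg i, le_refl 0⟩, if_pos ⟨by omega, le_refl 0⟩]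
  simp

lemma kraw_top (n i : ℕ) (hi : i ≤ n) : kraw n (n + 1) i = 0 := by
  have h : ((n : ℤ) + 1) = ((n + 1 : ℕ) : ℤ) := by push_cast; ring
  rw [h, kraw_eq_coeff n (n + 1) i hi]
  apply coeff_eq_zero_of_natDegree_lt
  have h1 : (1 - X : ℤ[X]).natDegree ≤ 1 := by
    refine le_trans (natDegree_sub_le 1 X) ?_
    simp
  have h2 : (1 + X : ℤ[X]).natDegree ≤ 1 := by
    refine le_trans (natDegree_add_le 1 X) ?_
    simp
  have := natDegree_mul_le (p := (1 - X : ℤ[X]) ^ i) (q := (1 + X : ℤ[X]) ^ (n - i))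
  have hd1 : ((1 - X : ℤ[X]) ^ i).natDegree ≤ i := by
    simpa using natDegree_pow_le_of_le i h1
  have hd2 : ((1 + X : ℤ[X]) ^ (n - i)).natDegree ≤ n - i := by
    simpa using natDegree_pow_le_of_le (n - i) h2
  omega

lemma kraw_key (n j i : ℕ) (hi : i ≤ n) (hj1 : 1 ≤ j) (hj2 : j ≤ n + 1) :
    kraw (n + 1) j ((2 * ((i + 1) / 2) : ℕ) : ℤ) =
      kraw n j i + kraw n ((n + 1 - j : ℕ) : ℤ) i := by
  obtain ⟨j', rfl⟩ : ∃ j', j = j' + 1 := ⟨j - 1, by omega⟩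
  have hj' : j' ≤ n := by omega
  have hnj : n + 1 - (j' + 1) = n - j' := by omega
  rcases Nat.even_or_odd i with he | ho
  · -- even case
    obtain ⟨m, hm⟩ := he
    have hei : 2 * ((i + 1) / 2) = i := by omega
    have hcast : ((2 * ((i + 1) / 2) : ℕ) : ℤ) = (i : ℤ) := by rw [hei]
    rw [hcast, hnj, kraw_eq_coeff (n + 1) (j' + 1) i (by omega),
      kraw_eq_coeff n (j' + 1) i hi, kraw_eq_coeff n (n - j') i hi]
    have hsplit : ((1 - X : ℤ[X]) ^ i * (1 + X) ^ (n + 1 - i)) =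
        ((1 - X) ^ i * (1 + X) ^ (n - i)) + ((1 - X) ^ i * (1 + X) ^ (n - i)) * X := by
      have h : n + 1 - i = (n - i) + 1 := by omega
      rw [h, pow_succ]; ring
    rw [hsplit, coeff_add, coeff_mul_X,
      coeff_symm n i hi j' hj']
    have : ((-1 : ℤ)) ^ i = 1 := Even.neg_one_pow ⟨m, hm⟩
    rw [this]
    ring
  · -- odd case
    have hei : 2 * ((i + 1) / 2) = i + 1 := by obtain ⟨m, hm⟩ := ho; omega
    have hcast : ((2 * ((i + 1) / 2) : ℕ) : ℤ) = ((i + 1 : ℕ) : ℤ) := by rw [hei]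
    rw [hcast, hnj, kraw_eq_coeff (n + 1) (j' + 1) (i + 1) (by omega),
      kraw_eq_coeff n (j' + 1) i hi, kraw_eq_coeff n (n - j') i hi]
    have hsplit : ((1 - X : ℤ[X]) ^ (i + 1) * (1 + X) ^ (n + 1 - (i + 1))) =
        ((1 - X) ^ i * (1 + X) ^ (n - i)) - ((1 - X) ^ i * (1 + X) ^ (n - i)) * X := by
      have h : n + 1 - (i + 1) = n - i := by omega
      rw [h, pow_succ]; ring
    rw [hsplit, coeff_sub, coeff_mul_X,
      coeff_symm n i hi j' hj']
    have : ((-1 : ℤ)) ^ i = -1 := Odd.neg_one_pow ho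
    rw [this]
    ring

/-- Extension preserves feasibility: if A is feasible for the (n,d) Delsarte LP,
then its extension A' (with A'_i = 0 for odd i and A'_i = A_i + A_{i-1} for even i,
where out-of-range entries of A are treated as 0) is feasible for the
(n+1, 2⌈d/2⌉) Delsarte LP. -/
theorem extension_preserves_feasibility (n d : ℕ) (hd : 1 ≤ d) (hdn : d ≤ n)
    (A : ℕ → ℚ) (hA : delsarteFeasible n d A) :
    delsarteFeasible (n + 1) (2 * ((d + 1) / 2))
      (fun i => if Even i then
          (if i ≤ n then A i else 0) + (if 1 ≤ i ∧ i - 1 ≤ n then A (i - 1) else 0)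
        else 0) := by
  obtain ⟨h0, hzero, hnonneg, hLP⟩ := hA
  refine ⟨?_, ?_, ?_, ?_⟩
  · norm_num [h0]
  · intro i h1 h2
    by_cases he : Even i
    · obtain ⟨m, hm⟩ := he
      have hi1 : i ≤ d - 1 := by omega
      have hi2 : 1 ≤ i - 1 ∧ i - 1 ≤ d - 1 := by omega
      simp only [if_pos (⟨m, hm⟩ : Even i)]
      have e1 : (if i ≤ n then A i else 0) = 0 := by
        split_ifs with h; exacts [hzero i h1 hi1, rfl]
      have e2 : (if 1 ≤ i ∧ i - 1 ≤ n then A (i - 1) else 0) = 0 := by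
        split_ifs with h; exacts [hzero (i - 1) hi2.1 hi2.2, rfl]
      rw [e1, e2, add_zero]
      simp
    · simp [he]
  · intro i hi
    dsimp only
    split_ifs with h1 h2 h3 h4
    · exact add_nonneg (hnonneg _ h2) (hnonneg _ h3.2)
    · exact add_nonneg (hnonneg _ h2) le_rfl
    · exact add_nonneg le_rfl (hnonneg _ h4.2)
    · exact add_nonneg le_rfl le_rfl
    · exact le_rfl
  · intro j hj1 hj2
    dsimp only
    have hstep : ∀ i ∈ Finset.range (n + 1 + 1),
        (if Even i then
          (if i ≤ n then A i else 0) + (if 1 ≤ i ∧ i - 1 ≤ n then A (i - 1) else 0)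
        else 0) * (kraw (n + 1) j i : ℚ)
        = (if Even i ∧ i ≤ n then A i else 0) * (kraw (n + 1) j i : ℚ)
          + (if Even i ∧ 1 ≤ i then A (i - 1) else 0) * (kraw (n + 1) j i : ℚ) := by
      intro i hi
      have hi' : i - 1 ≤ n := by
        have := Finset.mem_range.1 hi; omega
      by_cases he : Even i <;> by_cases ha : i ≤ n <;> by_cases hb : 1 ≤ i <;>
        simp [he, ha, hb, hi'] <;> ring
    rw [Finset.sum_congr rfl hstep, Finset.sum_add_distrib]
    have e1 : ∑ i ∈ Finset.range (n + 1 + 1),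
        (if Even i ∧ i ≤ n then A i else 0) * (kraw (n + 1) j i : ℚ)
        = ∑ i ∈ Finset.range (n + 1), (if Even i then A i else 0) * (kraw (n + 1) j i : ℚ) := by
      rw [Finset.sum_range_succ]
      have hlast : (if Even (n + 1) ∧ n + 1 ≤ n then A (n + 1) else 0) = 0 := by
        rw [if_neg]; rintro ⟨-, h⟩; omega
      rw [hlast, zero_mul, add_zero]
      refine Finset.sum_congr rfl fun i hi => ?_
      have hi' : i ≤ n := by have := Finset.mem_range.1 hi; omega
      by_cases he : Even i <;> simp [he, hi']
    have e2 : ∑ i ∈ Finset.range (n + 1 + 1),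
        (if Even i ∧ 1 ≤ i then A (i - 1) else 0) * (kraw (n + 1) j i : ℚ)
        = ∑ i ∈ Finset.range (n + 1),
            (if ¬ Even i then A i else 0) * (kraw (n + 1) j ((i + 1 : ℕ)) : ℚ) := by
      rw [Finset.sum_range_succ']
      have h00 : (if Even 0 ∧ 1 ≤ 0 then A (0 - 1) else 0) = 0 := by norm_num
      rw [h00, zero_mul, add_zero]
      refine Finset.sum_congr rfl fun i hi => ?_
      by_cases he : Even i
      · have hne : ¬ Even (i + 1) := by simp [Nat.even_add_one, he]
        simp [he, hne]
      · have hye : Even (i + 1) := Nat.even_add_one.2 he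
        simp [he, hye]
    rw [e1, e2, ← Finset.sum_add_distrib]
    have e3 : ∀ i ∈ Finset.range (n + 1),
        (if Even i then A i else 0) * (kraw (n + 1) j i : ℚ)
          + (if ¬ Even i then A i else 0) * (kraw (n + 1) j ((i + 1 : ℕ)) : ℚ)
        = A i * (kraw n j i : ℚ) + A i * (kraw n ((n + 1 - j : ℕ)) i : ℚ) := by
      intro i hi
      have hi' : i ≤ n := by have := Finset.mem_range.1 hi; omega
      have hkey := kraw_key n j i hi' hj1 hj2
      have hcast : ((kraw (n + 1) j ((2 * ((i + 1) / 2) : ℕ)) : ℤ) : ℚ)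
          = ((kraw n j i : ℤ) : ℚ) + ((kraw n ((n + 1 - j : ℕ)) i : ℤ) : ℚ) := by
        exact_mod_cast congrArg (fun z : ℤ => (z : ℚ)) hkey
      by_cases he : Even i
      · have hei : 2 * ((i + 1) / 2) = i := by obtain ⟨m, hm⟩ := he; omega
        rw [hei] at hcast
        rw [if_pos he, if_neg (not_not_intro he), zero_mul, add_zero, hcast]
        ring
      · have hei : 2 * ((i + 1) / 2) = i + 1 := by
          obtain ⟨m, hm⟩ := Nat.not_even_iff_odd.1 he
          omega
        rw [hei] at hcast
        rw [if_neg he, if_pos he, zero_mul, zero_add, hcast]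
        ring
    rw [Finset.sum_congr rfl e3, Finset.sum_add_distrib]
    have hS1 : 0 ≤ ∑ i ∈ Finset.range (n + 1), A i * (kraw n j i : ℚ) := by
      rcases Nat.lt_or_ge j (n + 1) with h | h
      · exact hLP j hj1 (by omega)
      · have hj : j = n + 1 := by omega
        subst hj
        refine le_of_eq (Finset.sum_eq_zero fun i hi => ?_).symm
        have hi' : i ≤ n := by have := Finset.mem_range.1 hi; omega
        have := kraw_top n i hi'
        rw [show ((kraw n ((n + 1 : ℕ)) i : ℤ) : ℚ) = 0 by exact_mod_cast this, mul_zero]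
    have hS2 : 0 ≤ ∑ i ∈ Finset.range (n + 1), A i * (kraw n ((n + 1 - j : ℕ)) i : ℚ) := by
      rcases Nat.lt_or_ge j (n + 1) with h | h
      · exact hLP (n + 1 - j) (by omega) (by omega)
      · have hj : j = n + 1 := by omega
        subst hj
        refine Finset.sum_nonneg fun i hi => ?_
        have hi' : i ≤ n := by have := Finset.mem_range.1 hi; omega
        have hz := kraw_zero n i hi'
        have : ((kraw n ((n + 1 - (n + 1) : ℕ)) i : ℤ) : ℚ) = 1 := by
          rw [show n + 1 - (n + 1) = 0 from Nat.sub_self _]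
          exact_mod_cast hz
        rw [this, mul_one]
        exact hnonneg i hi'
    exact add_nonneg hS1 hS2
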